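/- arXiv:1004.3503 — 2 statements merged into one kernel-verified Lean document; each statement's English description precedes it below -/
import Mathlib

section
/- Let a,b,c,d ∈ ℂ with (a²d² - b²c²)(b²d² - c²a²)(c²d² - a²b²) ≠ 0, and define Hudson's quartic coefficients A = (b⁴+c⁴-a⁴-d⁴)/(a²d²-b²c²), B = (c⁴+a⁴-b⁴-d⁴)/(b²d²-c²a²), C = (a⁴+b⁴-c⁴-d⁴)/(c²d²-a²b²), D = abcd(d²+a²-b²-c²)(d²+b²-c²-a²)(d²+c²-a²-b²)(a²+b²+c²+d²)/((a²d²-b²c²)(b²d²-c²a²)(c²d²-a²b²)). Then the point [a,b,c,d] lies on the Hudson quartic x⁴+y⁴+z⁴+w⁴ + 2Dxyzw + A(x²w²+y²z²) + B(y²w²+x²z²) + C(x²y²+z²w²) = 0. -/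
/-! Once its three denominators are cleared, the claim is a polynomial identity in `a, b, c, d`
with integer coefficients. -/

theorem hudson_quartic_node_cleared {R : Type*} [CommRing R] (a b c d : R) :
    (a^4 + b^4 + c^4 + d^4) * ((a^2*d^2 - b^2*c^2) * (b^2*d^2 - c^2*a^2) * (c^2*d^2 - a^2*b^2))
      + 2 * (a*b*c*d*(d^2+a^2-b^2-c^2)*(d^2+b^2-c^2-a^2)*(d^2+c^2-a^2-b^2)*(a^2+b^2+c^2+d^2))
          * (a*b*c*d)
      + (b^4+c^4-a^4-d^4) * (a^2*d^2 + b^2*c^2) * ((b^2*d^2 - c^2*a^2) * (c^2*d^2 - a^2*b^2))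
      + (c^4+a^4-b^4-d^4) * (b^2*d^2 + a^2*c^2) * ((a^2*d^2 - b^2*c^2) * (c^2*d^2 - a^2*b^2))
      + (a^4+b^4-c^4-d^4) * (a^2*b^2 + c^2*d^2) * ((a^2*d^2 - b^2*c^2) * (b^2*d^2 - c^2*a^2))
      = 0 := by
  ring

theorem node_on_hudson_quartic (a b c d : ℂ)
    (h : (a^2*d^2 - b^2*c^2) * (b^2*d^2 - c^2*a^2) * (c^2*d^2 - a^2*b^2) ≠ 0) :
    a^4 + b^4 + c^4 + d^4
      + 2 * (a*b*c*d*(d^2+a^2-b^2-c^2)*(d^2+b^2-c^2-a^2)*(d^2+c^2-a^2-b^2)*(a^2+b^2+c^2+d^2)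
          / ((a^2*d^2-b^2*c^2)*(b^2*d^2-c^2*a^2)*(c^2*d^2-a^2*b^2))) * (a*b*c*d)
      + ((b^4+c^4-a^4-d^4)/(a^2*d^2-b^2*c^2)) * (a^2*d^2 + b^2*c^2)
      + ((c^4+a^4-b^4-d^4)/(b^2*d^2-c^2*a^2)) * (b^2*d^2 + a^2*c^2)
      + ((a^4+b^4-c^4-d^4)/(c^2*d^2-a^2*b^2)) * (a^2*b^2 + c^2*d^2) = 0 := by
  -- Opaque denominators keep `field_simp` from renormalising them past its nonvanishing facts.
  generalize hp : a^2*d^2 - b^2*c^2 = p at *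
  generalize hq : b^2*d^2 - c^2*a^2 = q at *
  generalize hr : c^2*d^2 - a^2*b^2 = r at *
  have hp₀ : p ≠ 0 := left_ne_zero_of_mul (left_ne_zero_of_mul h)
  have hq₀ : q ≠ 0 := right_ne_zero_of_mul (left_ne_zero_of_mul h)
  have hr₀ : r ≠ 0 := right_ne_zero_of_mul h
  field_simp
  subst hp hq hr
  linear_combination hudson_quartic_node_cleared a b c d
end

section
/- Let a,b,c,d ∈ ℂ satisfy the nondegeneracy condition (a²d²-b²c²)(b²d²-c²a²)(c²d²-a²b²) ≠ 0 and define A, B, C, D as in Hudson's formulas. Then all sixteen points [c,d,a,b], [a,-b,-c,d], [-b,a,d,-c], [c,d,-a,-b], [-b,-a,d,c], [-c,d,a,-b], [d,-c,-b,a], [-a,-b,c,d], [d,c,-b,-a], [b,a,d,c], [-c,d,-a,b], [b,-a,d,-c], [d,-c,b,-a], [-a,b,-c,d], [d,c,b,a], together with [a,b,c,d], lie on the Hudson quartic x⁴+y⁴+z⁴+w⁴ + 2Dxyzw + A(x²w²+y²z²) + B(y²w²+x²z²) + C(x²y²+z²w²) = 0. -/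
/-!
The equation of the Hudson quartic is invariant under the permutations `(x,y,z,w) ↦ (y,x,w,z)` and
`(x,y,z,w) ↦ (z,w,x,y)` and under sign changes of two coordinates, and the sixteen points are the
orbit of `[a,b,c,d]` under the group these generate. So it suffices that `[a,b,c,d]` itself lies on the
quartic, which after clearing the three denominators is a polynomial identity in `a, b, c, d`.
-/

/-- Hudson's quartic equation with coefficients `A`, `B`, `C`, `D`. -/
def HudsonQuartic (A B C D x y z w : ℂ) : Prop :=
  x^4 + y^4 + z^4 + w^4 + 2*D*x*y*z*w + A*(x^2*w^2 + y^2*z^2)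
    + B*(y^2*w^2 + x^2*z^2) + C*(x^2*y^2 + z^2*w^2) = 0

namespace HudsonQuartic

variable {A B C D x y z w : ℂ}

theorem swap_within_pairs (h : HudsonQuartic A B C D x y z w) : HudsonQuartic A B C D y x w z := by
  unfold HudsonQuartic at *
  linear_combination h

theorem swap_pairs (h : HudsonQuartic A B C D x y z w) : HudsonQuartic A B C D z w x y := by
  unfold HudsonQuartic at *
  linear_combination h

theorem neg_fst_snd (h : HudsonQuartic A B C D x y z w) : HudsonQuartic A B C D (-x) (-y) z w := by
  unfold HudsonQuartic at *
  linear_combination h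

theorem neg_snd_thd (h : HudsonQuartic A B C D x y z w) : HudsonQuartic A B C D x (-y) (-z) w := by
  unfold HudsonQuartic at *
  linear_combination h

theorem neg_fst_thd (h : HudsonQuartic A B C D x y z w) : HudsonQuartic A B C D (-x) y (-z) w := by
  unfold HudsonQuartic at *
  linear_combination h

end HudsonQuartic

noncomputable section HudsonCoefficients

variable (a b c d : ℂ)

def hudsonA : ℂ := (b^4+c^4-a^4-d^4)/(a^2*d^2-b^2*c^2)

def hudsonB : ℂ := (c^4+a^4-b^4-d^4)/(b^2*d^2-c^2*a^2)

def hudsonC : ℂ := (a^4+b^4-c^4-d^4)/(c^2*d^2-a^2*b^2)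

def hudsonD : ℂ :=
  a*b*c*d*(d^2+a^2-b^2-c^2)*(d^2+b^2-c^2-a^2)*(d^2+c^2-a^2-b^2)*(a^2+b^2+c^2+d^2)
    / ((a^2*d^2-b^2*c^2)*(b^2*d^2-c^2*a^2)*(c^2*d^2-a^2*b^2))

variable {a b c d}

theorem hudsonQuartic_hudson_self
    (h : (a^2*d^2 - b^2*c^2) * (b^2*d^2 - c^2*a^2) * (c^2*d^2 - a^2*b^2) ≠ 0) :
    HudsonQuartic (hudsonA a b c d) (hudsonB a b c d) (hudsonC a b c d) (hudsonD a b c d)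
      a b c d := by
  obtain ⟨⟨hp, hq⟩, hr⟩ := (mul_ne_zero_iff.1 h).imp_left mul_ne_zero_iff.1
  have eA : hudsonA a b c d * (a^2*d^2-b^2*c^2) = b^4+c^4-a^4-d^4 := div_mul_cancel₀ _ hp
  have eB : hudsonB a b c d * (b^2*d^2-c^2*a^2) = c^4+a^4-b^4-d^4 := div_mul_cancel₀ _ hq
  have eC : hudsonC a b c d * (c^2*d^2-a^2*b^2) = a^4+b^4-c^4-d^4 := div_mul_cancel₀ _ hr
  have eD : hudsonD a b c d * ((a^2*d^2-b^2*c^2)*(b^2*d^2-c^2*a^2)*(c^2*d^2-a^2*b^2)) =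
      a*b*c*d*(d^2+a^2-b^2-c^2)*(d^2+b^2-c^2-a^2)*(d^2+c^2-a^2-b^2)*(a^2+b^2+c^2+d^2) :=
    div_mul_cancel₀ _ h
  apply mul_left_cancel₀ h
  linear_combination 2*(a*b*c*d)*eD
    + (a^2*d^2+b^2*c^2)*(b^2*d^2-c^2*a^2)*(c^2*d^2-a^2*b^2)*eA
    + (b^2*d^2+a^2*c^2)*(a^2*d^2-b^2*c^2)*(c^2*d^2-a^2*b^2)*eB
    + (a^2*b^2+c^2*d^2)*(a^2*d^2-b^2*c^2)*(b^2*d^2-c^2*a^2)*eC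

end HudsonCoefficients

theorem sixteen_nodes_on_hudson_quartic (a b c d : ℂ)
    (h : (a^2*d^2 - b^2*c^2) * (b^2*d^2 - c^2*a^2) * (c^2*d^2 - a^2*b^2) ≠ 0) :
    let A := (b^4+c^4-a^4-d^4)/(a^2*d^2-b^2*c^2)
    let B := (c^4+a^4-b^4-d^4)/(b^2*d^2-c^2*a^2)
    let C := (a^4+b^4-c^4-d^4)/(c^2*d^2-a^2*b^2)
    let D := a*b*c*d*(d^2+a^2-b^2-c^2)*(d^2+b^2-c^2-a^2)*(d^2+c^2-a^2-b^2)*(a^2+b^2+c^2+d^2)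
      / ((a^2*d^2-b^2*c^2)*(b^2*d^2-c^2*a^2)*(c^2*d^2-a^2*b^2))
    HudsonQuartic A B C D a b c d ∧
    HudsonQuartic A B C D c d a b ∧
    HudsonQuartic A B C D a (-b) (-c) d ∧
    HudsonQuartic A B C D (-b) a d (-c) ∧
    HudsonQuartic A B C D c d (-a) (-b) ∧
    HudsonQuartic A B C D (-b) (-a) d c ∧
    HudsonQuartic A B C D (-c) d a (-b) ∧
    HudsonQuartic A B C D d (-c) (-b) a ∧
    HudsonQuartic A B C D (-a) (-b) c d ∧
    HudsonQuartic A B C D d c (-b) (-a) ∧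
    HudsonQuartic A B C D b a d c ∧
    HudsonQuartic A B C D (-c) d (-a) b ∧
    HudsonQuartic A B C D b (-a) d (-c) ∧
    HudsonQuartic A B C D d (-c) b (-a) ∧
    HudsonQuartic A B C D (-a) b (-c) d ∧
    HudsonQuartic A B C D d c b a := by
  intro A B C D
  have P : HudsonQuartic A B C D a b c d := hudsonQuartic_hudson_self h
  exact ⟨P, P.swap_pairs, P.neg_snd_thd, P.neg_snd_thd.swap_within_pairs,
    P.neg_fst_snd.swap_pairs, P.neg_fst_snd.swap_within_pairs, P.neg_snd_thd.swap_pairs,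
    P.neg_snd_thd.swap_pairs.swap_within_pairs, P.neg_fst_snd,
    P.neg_fst_snd.swap_pairs.swap_within_pairs, P.swap_within_pairs, P.neg_fst_thd.swap_pairs,
    P.neg_fst_thd.swap_within_pairs, P.neg_fst_thd.swap_pairs.swap_within_pairs, P.neg_fst_thd,
    P.swap_pairs.swap_within_pairs⟩
end
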